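/- arXiv:1904.02031 — 5 statements merged into one kernel-verified Lean document; each statement's English description precedes it below -/
import Mathlib

section
/- Let S be a real symmetric positive semidefinite b×b matrix (b ≥ 3) with row sums zero whose kernel is exactly the constant vectors, and let λ₂ be its second-smallest eigenvalue. Then the matrix S' = S - λ₂·I_b + (λ₂/b)·J_b has rank at most b - 2, and there exists a real b×(b-2) matrix W with W·W^T = S' and W^T·e = 0. -/
/-!
`S'` annihilates both `𝟙` (the `J`-term exactly compensates `-λ₂ I` there) and a
`λ₂`-eigenvector orthogonal to `𝟙`, so its rank is at most `b - 2`. Writing a vector as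
`y + c 𝟙` with `y ⊥ 𝟙`, the quadratic form of `S'` becomes `yᵀ S y - λ₂ yᵀ y ≥ 0` by
minimality of `λ₂`, so `S'` is positive semidefinite. From the spectral decomposition
`S' = U diag(μ) Uᵀ`, the matrix `U diag(√μ)` has at most `b - 2` nonzero columns; keeping
those gives `W`. Finally `W Wᵀ 𝟙 = S' 𝟙 = 0` forces `Wᵀ 𝟙 = 0`.
-/

open Matrix

namespace Matrix

theorem rank_add_card_le_of_mulVec_eq_zero {m n K ι : Type*} [Fintype n] [Fintype ι] [Field K]
    (A : Matrix m n K) {v : ι → n → K} (hv : LinearIndependent K v) (hAv : ∀ i, A *ᵥ v i = 0) :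
    A.rank + Fintype.card ι ≤ Fintype.card n := by
  have hker : Submodule.span K (Set.range v) ≤ LinearMap.ker A.mulVecLin :=
    Submodule.span_le.mpr (Set.range_subset_iff.mpr hAv)
  have := LinearMap.finrank_range_add_finrank_ker A.mulVecLin
  rw [Module.finrank_fintype_fun_eq_card] at this
  rw [rank, ← finrank_span_eq_card hv]
  have := Submodule.finrank_mono hker
  omega

theorem linearIndependent_pair_of_dotProduct_eq_zero {n R : Type*} [Fintype n] [CommRing R]
    [LinearOrder R] [IsStrictOrderedRing R] {u v : n → R} (hu : u ≠ 0) (hv : v ≠ 0)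
    (huv : u ⬝ᵥ v = 0) : LinearIndependent R ![u, v] := by
  rw [LinearIndependent.pair_iff]
  intro s t hst
  have hs := congrArg (u ⬝ᵥ ·) hst
  have ht := congrArg (v ⬝ᵥ ·) hst
  simp only [dotProduct_add, dotProduct_smul, huv, dotProduct_comm v u, smul_eq_mul, mul_zero,
    add_zero, zero_add, dotProduct_zero] at hs ht
  exact ⟨(mul_eq_zero.mp hs).resolve_right (dotProduct_self_eq_zero.not.mpr hu),
    (mul_eq_zero.mp ht).resolve_right (dotProduct_self_eq_zero.not.mpr hv)⟩

variable {m k R : Type*} [Fintype k] [CommSemiring R]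

theorem exists_mul_transpose_eq_of_card_le {p : Type*} [Fintype p] (W : Matrix m k R)
    (h : Fintype.card k ≤ Fintype.card p) : ∃ W' : Matrix m p R, W' * W'ᵀ = W * Wᵀ := by
  obtain ⟨e⟩ : Nonempty (k ⊕ Fin (Fintype.card p - Fintype.card k) ≃ p) :=
    Fintype.card_eq.mp (by simp; omega)
  refine ⟨(fromCols W 0).submatrix id e.symm, ?_⟩
  rw [transpose_submatrix, submatrix_mul_equiv _ _ _ e.symm, transpose_fromCols,
    fromCols_mul_fromRows]
  simp

theorem exists_mul_transpose_eq_of_card_support_le {p : Type*} [Fintype p] (W : Matrix m k R)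
    (s : Finset k) (hW : ∀ i, ∀ j ∉ s, W i j = 0) (hs : s.card ≤ Fintype.card p) :
    ∃ W' : Matrix m p R, W' * W'ᵀ = W * Wᵀ := by
  obtain ⟨W', hW'⟩ := exists_mul_transpose_eq_of_card_le (W.submatrix id ((↑) : s → k))
    (by simpa using hs)
  refine ⟨W', hW'.trans ?_⟩
  ext i i'
  simp only [mul_apply, submatrix_apply, transpose_apply, id]
  exact Finset.sum_coe_sort s (fun j => W i j * W i' j) |>.trans
    (Finset.sum_subset (Finset.subset_univ s) (fun j _ hj => by simp [hW i j hj]))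

end Matrix

namespace Matrix.PosSemidef

variable {n : Type*} [Fintype n] [DecidableEq n] {A : Matrix n n ℝ}

theorem eq_mul_transpose_eigenvectorUnitary_mul_diagonal_sqrt (hA : A.PosSemidef) :
    A = ((hA.isHermitian.eigenvectorUnitary : Matrix n n ℝ) *
      diagonal (fun i => √(hA.isHermitian.eigenvalues i))) *
      ((hA.isHermitian.eigenvectorUnitary : Matrix n n ℝ) *
      diagonal (fun i => √(hA.isHermitian.eigenvalues i)))ᵀ := by
  conv_lhs => rw [hA.isHermitian.spectral_theorem]
  simp only [Unitary.conjStarAlgAut_apply, transpose_mul, diagonal_transpose, Matrix.mul_assoc]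
  rw [← Matrix.mul_assoc (diagonal _), diagonal_mul_diagonal, star_eq_conjTranspose,
    conjTranspose_eq_transpose_of_trivial]
  congr 3
  ext i
  simp [Real.mul_self_sqrt (hA.eigenvalues_nonneg i)]

theorem exists_mul_transpose_eq_of_rank_le (hA : A.PosSemidef) {r : ℕ} (hr : A.rank ≤ r) :
    ∃ W : Matrix n (Fin r) ℝ, W * Wᵀ = A := by
  rw [hA.eq_mul_transpose_eigenvectorUnitary_mul_diagonal_sqrt]
  refine exists_mul_transpose_eq_of_card_support_le _ {i | hA.isHermitian.eigenvalues i ≠ 0}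
    (fun i j hj => ?_) ?_
  · simp_all
  · rw [← Fintype.card_subtype, ← hA.isHermitian.rank_eq_card_non_zero_eigs]
    simpa using hr

end Matrix.PosSemidef

section ShiftedMatrix

variable {n : Type*} [Fintype n] [DecidableEq n] (S : Matrix n n ℝ) (lam : ℝ)

noncomputable def shiftedMatrix : Matrix n n ℝ :=
  S - lam • 1 + (lam / Fintype.card n) • of fun _ _ => 1

variable {S lam}

theorem shiftedMatrix_mulVec (x : n → ℝ) :
    shiftedMatrix S lam *ᵥ x = S *ᵥ x - lam • x + (lam / Fintype.card n * (x ⬝ᵥ 1)) • 1 := by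
  have hJ : (of fun _ _ => (1 : ℝ) : Matrix n n ℝ) *ᵥ x = (x ⬝ᵥ 1) • 1 := by
    ext i; simp [mulVec, dotProduct]
  rw [shiftedMatrix, add_mulVec, sub_mulVec, smul_mulVec, smul_mulVec, one_mulVec, hJ, smul_smul]

theorem shiftedMatrix_mulVec_one [Nonempty n] (hrow : S *ᵥ 1 = 0) :
    shiftedMatrix S lam *ᵥ 1 = 0 := by
  rw [shiftedMatrix_mulVec, hrow]
  ext i
  simp [dotProduct]

theorem shiftedMatrix_mulVec_of_mulVec_eq_smul {x : n → ℝ} (hx1 : x ⬝ᵥ 1 = 0)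
    (hx : S *ᵥ x = lam • x) : shiftedMatrix S lam *ᵥ x = 0 := by
  rw [shiftedMatrix_mulVec, hx, hx1]
  simp

theorem isHermitian_shiftedMatrix (hS : S.IsHermitian) : (shiftedMatrix S lam).IsHermitian := by
  refine (hS.sub (isHermitian_one.smul (.all lam))).add (IsHermitian.smul ?_ (.all _))
  ext i j
  rfl

theorem dotProduct_shiftedMatrix_mulVec [Nonempty n] (hS : S.IsHermitian) (hrow : S *ᵥ 1 = 0)
    {y : n → ℝ} (hy : y ⬝ᵥ 1 = 0) (c : ℝ) :
    (y + c • 1) ⬝ᵥ shiftedMatrix S lam *ᵥ (y + c • 1) = y ⬝ᵥ S *ᵥ y - lam * (y ⬝ᵥ y) := by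
  have h1S : 1 ᵥ* S = 0 := by
    rw [← mulVec_transpose, ← conjTranspose_eq_transpose_of_trivial, hS.eq, hrow]
  have h1Sy : (1 : n → ℝ) ⬝ᵥ S *ᵥ y = 0 := by rw [dotProduct_mulVec, h1S, zero_dotProduct]
  have h11 : (1 : n → ℝ) ⬝ᵥ 1 = Fintype.card n := by simp [dotProduct]
  have hcard : (Fintype.card n : ℝ) ≠ 0 := by positivity
  rw [shiftedMatrix_mulVec, mulVec_add, mulVec_smul, hrow, smul_zero, add_zero]
  simp only [dotProduct_add, add_dotProduct, dotProduct_sub, dotProduct_smul, smul_dotProduct,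
    h1Sy, hy, dotProduct_comm 1 y, h11, smul_eq_mul]
  field_simp
  ring

theorem posSemidef_shiftedMatrix [Nonempty n] (hS : S.PosSemidef) (hrow : S *ᵥ 1 = 0)
    (hmin : ∀ x : n → ℝ, x ⬝ᵥ 1 = 0 → lam * (x ⬝ᵥ x) ≤ x ⬝ᵥ S *ᵥ x) :
    (shiftedMatrix S lam).PosSemidef := by
  refine .of_dotProduct_mulVec_nonneg (isHermitian_shiftedMatrix hS.isHermitian) fun x => ?_
  set c := (x ⬝ᵥ 1) / Fintype.card n
  have hy : (x - c • 1) ⬝ᵥ 1 = 0 := by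
    simp [sub_dotProduct, c]
  rw [star_trivial, ← sub_add_cancel x (c • 1),
    dotProduct_shiftedMatrix_mulVec hS.isHermitian hrow hy]
  exact sub_nonneg.mpr (hmin _ hy)

end ShiftedMatrix

theorem shifted_matrix_factorization_general {b : ℕ}
    (S : Matrix (Fin b) (Fin b) ℝ)
    (hSpsd : S.PosSemidef)
    (hrow : S.mulVec 1 = 0)
    (lam2 : ℝ)
    (hmin : ∀ x : Fin b → ℝ, x ⬝ᵥ (1 : Fin b → ℝ) = 0 →
      lam2 * (x ⬝ᵥ x) ≤ x ⬝ᵥ S.mulVec x)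
    (heig : ∃ x : Fin b → ℝ, x ≠ 0 ∧ x ⬝ᵥ (1 : Fin b → ℝ) = 0 ∧
      S.mulVec x = lam2 • x) :
    (S - lam2 • (1 : Matrix (Fin b) (Fin b) ℝ)
        + (lam2 / b) • (Matrix.of fun _ _ => (1 : ℝ))).rank ≤ b - 2 ∧
    ∃ W : Matrix (Fin b) (Fin (b - 2)) ℝ,
      W * Wᵀ = S - lam2 • (1 : Matrix (Fin b) (Fin b) ℝ)
        + (lam2 / b) • (Matrix.of fun _ _ => (1 : ℝ)) ∧
      Wᵀ.mulVec 1 = 0 := by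
  obtain ⟨x, hx0, hx1, hSx⟩ := heig
  obtain ⟨i, -⟩ := Function.ne_iff.mp hx0
  have : Nonempty (Fin b) := ⟨i⟩
  have hS' : S - lam2 • 1 + (lam2 / b) • (of fun _ _ => 1) = shiftedMatrix S lam2 := by
    simp [shiftedMatrix]
  rw [hS']
  have hone : shiftedMatrix S lam2 *ᵥ 1 = 0 := shiftedMatrix_mulVec_one hrow
  have hrank : (shiftedMatrix S lam2).rank ≤ b - 2 := by
    have := rank_add_card_le_of_mulVec_eq_zero _
      (linearIndependent_pair_of_dotProduct_eq_zero one_ne_zero hx0 (by rwa [dotProduct_comm]))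
      (Fin.forall_fin_two.mpr ⟨hone, shiftedMatrix_mulVec_of_mulVec_eq_smul hx1 hSx⟩)
    simp only [Fintype.card_fin] at this
    omega
  obtain ⟨W, hW⟩ :=
    (posSemidef_shiftedMatrix hSpsd hrow hmin).exists_mul_transpose_eq_of_rank_le hrank
  refine ⟨hrank, W, hW, ?_⟩
  rwa [← conjTranspose_mul_self_mulVec_eq_zero, conjTranspose_eq_transpose_of_trivial,
    transpose_transpose, hW]

theorem shifted_matrix_factorization {b : ℕ} (hb : 3 ≤ b)
    (S : Matrix (Fin b) (Fin b) ℝ) (hSsymm : Sᵀ = S)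
    (hSpsd : S.PosSemidef)
    (hrow : S.mulVec 1 = 0)
    (hker : ∀ x : Fin b → ℝ, S.mulVec x = 0 → ∃ c : ℝ, x = fun _ => c)
    (lam2 : ℝ)
    (hmin : ∀ x : Fin b → ℝ, x ⬝ᵥ (1 : Fin b → ℝ) = 0 →
      lam2 * (x ⬝ᵥ x) ≤ x ⬝ᵥ S.mulVec x)
    (heig : ∃ x : Fin b → ℝ, x ≠ 0 ∧ x ⬝ᵥ (1 : Fin b → ℝ) = 0 ∧
      S.mulVec x = lam2 • x) :
    (S - lam2 • (1 : Matrix (Fin b) (Fin b) ℝ)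
        + (lam2 / b) • (Matrix.of fun _ _ => (1 : ℝ))).rank ≤ b - 2 ∧
    ∃ W : Matrix (Fin b) (Fin (b - 2)) ℝ,
      W * Wᵀ = S - lam2 • (1 : Matrix (Fin b) (Fin b) ℝ)
        + (lam2 / b) • (Matrix.of fun _ _ => (1 : ℝ)) ∧
      Wᵀ.mulVec 1 = 0 :=
  shifted_matrix_factorization_general S hSpsd hrow lam2 hmin heig
end

section
/- Let W be a real b×n matrix with W^T·e_b = 0 (columns orthogonal to the all-ones vector), let λ₂ > 0, δ = λ₂/(2n), ε = √(bδ), and let F be any real symmetric b×b matrix. Define the (b+n)×(b+n) complex matrix L with blocks A = λ₂·I_b - (λ₂/(2b))·J_b + F·i, B = -δ·J_{b×n} + ε·W·i, and C = δb·I_n. Then the real part of the Schur complement A - B C⁻¹ B^T equals W·W^T + λ₂·I_b - (λ₂/b)·J_b. -/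
/-!
Write `A = Aᵣ + i F` and `B = Bᵣ + i εW` with real `Aᵣ` and `Bᵣ = -δ J_{b×n}`. As `C = δb I_n`
is a real scalar matrix, the real part of `A - B C⁻¹ Bᵀ` is `Aᵣ - (δb)⁻¹ (Bᵣ Bᵣᵀ - ε² W Wᵀ)`.
Since `J_{b×n} J_{n×b} = n J_b`, `ε² = bδ` and `nδ = λ₂/2`, this is
`λ₂ I_b - (λ₂/(2b)) J_b - (λ₂/(2b)) J_b + W Wᵀ`.
-/

open Matrix Complex

namespace Matrix

variable {l m n : Type*}

theorem inv_smul_one {K : Type*} [Field K] [Fintype n] [DecidableEq n] (c : K) :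
    (c • (1 : Matrix n n K))⁻¹ = c⁻¹ • 1 := by
  rcases eq_or_ne c 0 with rfl | hc
  · simp
  · exact inv_eq_left_inv <| by rw [smul_mul_smul_comm, inv_mul_cancel₀ hc, one_smul, mul_one]

theorem transpose_of_const {α : Type*} (c : α) :
    (of fun (_ : m) (_ : n) => c)ᵀ = of fun _ _ => c :=
  rfl

theorem of_one_mul_of_one {R : Type*} [NonAssocSemiring R] [Fintype m] :
    (of fun (_ : l) (_ : m) => (1 : R)) * (of fun (_ : m) (_ : n) => (1 : R)) =
      (Fintype.card m : R) • of fun _ _ => 1 := by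
  ext i j
  simp [mul_apply]

theorem map_re_mul [Fintype m] (M : Matrix l m ℂ) (N : Matrix m n ℂ) :
    (M * N).map re = M.map re * N.map re - M.map im * N.map im := by
  ext i j
  simp [mul_apply, re_sum, Finset.sum_sub_distrib]

theorem map_re_ofReal_smul (r : ℝ) (M : Matrix m n ℂ) :
    ((r : ℂ) • M).map re = r • M.map re := by
  ext i j
  simp

theorem map_re_ofReal_add_I_smul (X Y : Matrix m n ℝ) :
    (X.map ofReal + I • Y.map ofReal).map re = X := by
  ext i j
  simp

theorem map_im_ofReal_add_I_smul (X Y : Matrix m n ℝ) :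
    (X.map ofReal + I • Y.map ofReal).map im = Y := by
  ext i j
  simp

theorem map_re_schur_complement_of_real_scalar [Fintype n] [DecidableEq n]
    (Ar Ai : Matrix m m ℝ) (Br Bi : Matrix m n ℝ) (c : ℝ) :
    (Ar.map ofReal + I • Ai.map ofReal
        - (Br.map ofReal + I • Bi.map ofReal) * ((c : ℂ) • (1 : Matrix n n ℂ))⁻¹
          * (Br.map ofReal + I • Bi.map ofReal)ᵀ).map re
      = Ar - c⁻¹ • (Br * Brᵀ - Bi * Biᵀ) := by
  rw [Matrix.map_sub _ (fun _ _ => sub_re _ _), inv_smul_one, ← ofReal_inv,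
    Matrix.mul_smul, Matrix.mul_one, Matrix.smul_mul, map_re_ofReal_smul, map_re_mul,
    transpose_map, transpose_map]
  simp only [map_re_ofReal_add_I_smul, map_im_ofReal_add_I_smul]

end Matrix

theorem real_part_of_schur_complement_general {b n : ℕ} (hb : 0 < b) (hn : 0 < n)
    (W : Matrix (Fin b) (Fin n) ℝ)
    (lam2 : ℝ) (hlam2 : 0 < lam2)
    (δ ε : ℝ) (hδ : δ = lam2 / (2 * n)) (hε : ε = Real.sqrt (b * δ))
    (F : Matrix (Fin b) (Fin b) ℝ)
    (A : Matrix (Fin b) (Fin b) ℂ)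
    (hA : A = (lam2 : ℂ) • (1 : Matrix (Fin b) (Fin b) ℂ)
        - ((lam2 / (2 * b) : ℝ) : ℂ) • (Matrix.of fun _ _ => (1 : ℂ))
        + Complex.I • (F.map (Complex.ofReal)))
    (B : Matrix (Fin b) (Fin n) ℂ)
    (hB : B = -((δ : ℂ) • (Matrix.of fun _ _ => (1 : ℂ)))
        + Complex.I • ((ε : ℂ) • (W.map (Complex.ofReal))))
    (C : Matrix (Fin n) (Fin n) ℂ)
    (hC : C = ((δ * b : ℝ) : ℂ) • (1 : Matrix (Fin n) (Fin n) ℂ)) :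
    (Matrix.of fun i j => ((A - B * C⁻¹ * Bᵀ) i j).re)
      = W * Wᵀ + lam2 • (1 : Matrix (Fin b) (Fin b) ℝ)
        - (lam2 / b) • (Matrix.of fun _ _ => (1 : ℝ)) := by
  have hA' : A =
      (lam2 • 1 - (lam2 / (2 * b)) • of fun _ _ => 1 : Matrix (Fin b) (Fin b) ℝ).map ofReal
        + I • F.map ofReal := by
    rw [hA]; ext i j; by_cases h : i = j <;> simp [one_apply, h]
  have hB' : B =
      (-(δ • of fun _ _ => 1 : Matrix (Fin b) (Fin n) ℝ)).map ofReal + I • (ε • W).map ofReal := by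
    rw [hB]; ext i j; simp
  have hεε : ε * ε = b * δ := by rw [hε, Real.mul_self_sqrt (by rw [hδ]; positivity)]
  change (A - B * C⁻¹ * Bᵀ).map re = _
  rw [hA', hB', hC, map_re_schur_complement_of_real_scalar]
  simp only [transpose_neg, transpose_smul, transpose_of_const, Matrix.neg_mul, Matrix.mul_neg,
    Matrix.smul_mul, Matrix.mul_smul, smul_smul, of_one_mul_of_one, Fintype.card_fin, hεε]
  have hb0 : (b : ℝ) ≠ 0 := by positivity
  have hn0 : (n : ℝ) ≠ 0 := by positivity
  subst hδ
  match_scalars <;> field_simp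
  ring

theorem real_part_of_schur_complement {b n : ℕ} (hb : 0 < b) (hn : 0 < n)
    (W : Matrix (Fin b) (Fin n) ℝ) (hW : Wᵀ.mulVec 1 = 0)
    (lam2 : ℝ) (hlam2 : 0 < lam2)
    (δ ε : ℝ) (hδ : δ = lam2 / (2 * n)) (hε : ε = Real.sqrt (b * δ))
    (F : Matrix (Fin b) (Fin b) ℝ) (hF : Fᵀ = F)
    (A : Matrix (Fin b) (Fin b) ℂ)
    (hA : A = (lam2 : ℂ) • (1 : Matrix (Fin b) (Fin b) ℂ)
        - ((lam2 / (2 * b) : ℝ) : ℂ) • (Matrix.of fun _ _ => (1 : ℂ))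
        + Complex.I • (F.map (Complex.ofReal)))
    (B : Matrix (Fin b) (Fin n) ℂ)
    (hB : B = -((δ : ℂ) • (Matrix.of fun _ _ => (1 : ℂ)))
        + Complex.I • ((ε : ℂ) • (W.map (Complex.ofReal))))
    (C : Matrix (Fin n) (Fin n) ℂ)
    (hC : C = ((δ * b : ℝ) : ℂ) • (1 : Matrix (Fin n) (Fin n) ℂ)) :
    (Matrix.of fun i j => ((A - B * C⁻¹ * Bᵀ) i j).re)
      = W * Wᵀ + lam2 • (1 : Matrix (Fin b) (Fin b) ℝ)
        - (lam2 / b) • (Matrix.of fun _ _ => (1 : ℝ)) :=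
  real_part_of_schur_complement_general hb hn W lam2 hlam2 δ ε hδ hε F A hA B hB C hC
end

section
/- Every complex symmetric b×b matrix Λ = S + Ti (b ≥ 3) satisfying (1) all row sums of Λ are zero, (2) S is positive semidefinite, and (3) S·x = 0 only for constant vectors x, is the Schur complement A - B C⁻¹ B^T of a (b+n)×(b+n) matrix L = [[A,B],[B^T,C]] with n = b-2 such that: all row sums of L are zero, all nonzero off-diagonal entries of L have negative real part, and L is symmetric. -/
/-!
Write `S = Re Λ`, let `μ` be the least nonzero eigenvalue of `S` and `P = I - J / b` the projection
onto the complement of the constants. In an eigenbasis of `S` (whose zero eigenvector is constant),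
`S - μ P` has eigenvalues `λ_k - μ ≥ 0` on the nonconstant eigenvectors and `0` on the constant one,
so it vanishes on two eigenvectors and factors as `G Gᵀ` with `G` real of size `b × (b - 2)`;
since `(S - μ P) 1 = 0`, the columns of `G` sum to zero.

Put `C = μ I`, `B = -μ / b - i √μ G` and `A = Λ + B C⁻¹ Bᵀ`, so that the Schur complement is `Λ`.
The column sums of `B` are `-μ`, which makes every row sum of `L` vanish, and for `u ≠ v`
`Re A_uv = S_uv + (b - 2) μ / b² - (G Gᵀ)_uv = -2 μ / b² < 0`.
-/

open Matrix

noncomputable def centeringMatrix (n : Type*) [Fintype n] [DecidableEq n] : Matrix n n ℝ :=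
  1 - (Fintype.card n : ℝ)⁻¹ • of fun _ _ => 1

theorem centeringMatrix_mulVec_one (n : Type*) [Fintype n] [DecidableEq n] :
    centeringMatrix n *ᵥ 1 = 0 := by
  ext u
  have : Nonempty n := ⟨u⟩
  simp [centeringMatrix, mulVec, dotProduct, one_apply]

theorem Matrix.submatrix_mul_transpose_submatrix_of_forall_notMem_range
    {l k m R : Type*} [Fintype k] [Fintype m] [NonUnitalNonAssocSemiring R]
    (X : Matrix l k R) {e : m → k} (he : Function.Injective e)
    (hX : ∀ j ∉ Set.range e, ∀ i, X i j = 0) :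
    X.submatrix id e * (X.submatrix id e)ᵀ = X * Xᵀ := by
  ext u v
  exact Fintype.sum_of_injective e he _ _ (fun j hj => by simp [hX j hj]) fun _ => rfl

theorem Matrix.mul_diagonal_sqrt_mul_transpose {l n : Type*} [Fintype n] [DecidableEq n]
    (U : Matrix l n ℝ) {w : n → ℝ} (hw : 0 ≤ w) :
    U * diagonal (fun k => √(w k)) * (U * diagonal fun k => √(w k))ᵀ = U * diagonal w * Uᵀ := by
  rw [transpose_mul, diagonal_transpose, Matrix.mul_assoc, ← Matrix.mul_assoc (diagonal _),
    diagonal_mul_diagonal]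
  simp_rw [Real.mul_self_sqrt (hw _)]
  rw [Matrix.mul_assoc]

namespace Matrix.IsHermitian

variable {n : Type*} [Fintype n] [DecidableEq n] {S : Matrix n n ℝ} (hS : S.IsHermitian)

theorem eigenvectorUnitary_mul_transpose :
    (hS.eigenvectorUnitary : Matrix n n ℝ) * (hS.eigenvectorUnitary : Matrix n n ℝ)ᵀ = 1 := by
  simpa [star_eq_conjTranspose] using Unitary.mul_star_self_of_mem hS.eigenvectorUnitary.2

theorem transpose_mul_eigenvectorUnitary :
    (hS.eigenvectorUnitary : Matrix n n ℝ)ᵀ * (hS.eigenvectorUnitary : Matrix n n ℝ) = 1 := by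
  simpa [star_eq_conjTranspose] using Unitary.star_mul_self_of_mem hS.eigenvectorUnitary.2

theorem eq_eigenvectorUnitary_mul_diagonal_mul_transpose :
    S = (hS.eigenvectorUnitary : Matrix n n ℝ) * diagonal hS.eigenvalues *
      (hS.eigenvectorUnitary : Matrix n n ℝ)ᵀ := by
  conv_lhs => rw [hS.spectral_theorem]
  simp [star_eq_conjTranspose]

theorem exists_eigenvalues_eq_zero [Nonempty n] (h1 : S *ᵥ 1 = 0) :
    ∃ k, hS.eigenvalues k = 0 := by
  have hdet : S.det = 0 := exists_mulVec_eq_zero_iff.mp ⟨1, one_ne_zero, h1⟩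
  simpa [hS.det_eq_prod_eigenvalues, Finset.prod_eq_zero_iff] using hdet

theorem eigenvectorBasis_eq_const_of_eigenvalues_eq_zero
    (hker : ∀ x, S *ᵥ x = 0 → ∃ c : ℝ, x = fun _ => c) {k : n} (hk : hS.eigenvalues k = 0) :
    ∃ c : ℝ, c * c = (Fintype.card n : ℝ)⁻¹ ∧ ⇑(hS.eigenvectorBasis k) = fun _ => c := by
  obtain ⟨c, hc⟩ := hker _ (by rw [hS.mulVec_eigenvectorBasis, hk, zero_smul])
  refine ⟨c, ?_, hc⟩
  have hnorm := congr_fun₂ hS.transpose_mul_eigenvectorUnitary k k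
  simp only [transpose_apply, mul_apply, eigenvectorUnitary_apply, hc, Finset.sum_const,
    Finset.card_univ, nsmul_eq_mul, one_apply_eq] at hnorm
  exact eq_inv_of_mul_eq_one_right hnorm

theorem eigenvalues_pos_of_ne_of_eigenvalues_eq_zero (hpsd : S.PosSemidef)
    (hker : ∀ x, S *ᵥ x = 0 → ∃ c : ℝ, x = fun _ => c) {k₀ k : n}
    (hk₀ : hS.eigenvalues k₀ = 0) (hk : k ≠ k₀) : 0 < hS.eigenvalues k := by
  refine (hpsd.eigenvalues_nonneg k).lt_of_ne fun hk0 => ?_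
  obtain ⟨c, hc, hck⟩ := hS.eigenvectorBasis_eq_const_of_eigenvalues_eq_zero hker hk0.symm
  obtain ⟨c₀, hc₀, hck₀⟩ := hS.eigenvectorBasis_eq_const_of_eigenvalues_eq_zero hker hk₀
  -- two distinct orthonormal eigenvectors cannot both be constant
  have horth := congr_fun₂ hS.transpose_mul_eigenvectorUnitary k k₀
  simp only [transpose_apply, mul_apply, eigenvectorUnitary_apply, hck, hck₀, Finset.sum_const,
    Finset.card_univ, nsmul_eq_mul, one_apply_ne hk] at horth
  have hzero : (Fintype.card n : ℝ) * (c * c) * (c₀ * c₀) = 0 := by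
    linear_combination (c * c₀) * horth
  have : Nonempty n := ⟨k⟩
  simp [hc, hc₀] at hzero

theorem centeringMatrix_eq_of_eigenvalues_eq_zero
    (hker : ∀ x, S *ᵥ x = 0 → ∃ c : ℝ, x = fun _ => c) {k₀ : n} (hk₀ : hS.eigenvalues k₀ = 0) :
    centeringMatrix n = (hS.eigenvectorUnitary : Matrix n n ℝ) * diagonal (1 - Pi.single k₀ 1) *
      (hS.eigenvectorUnitary : Matrix n n ℝ)ᵀ := by
  obtain ⟨c, hc, hck₀⟩ := hS.eigenvectorBasis_eq_const_of_eigenvalues_eq_zero hker hk₀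
  have hdiag : diagonal (1 - Pi.single k₀ 1) = 1 - diagonal (Pi.single k₀ (1 : ℝ)) := by
    rw [← diagonal_one, diagonal_sub]; rfl
  rw [hdiag, mul_sub, mul_one, sub_mul,
    hS.eigenvectorUnitary_mul_transpose, centeringMatrix]
  congr 1
  ext u v
  simp [mul_apply, diagonal_apply, Pi.single_apply, hck₀, hc]

theorem sub_smul_centeringMatrix_eq_of_eigenvalues_eq_zero
    (hker : ∀ x, S *ᵥ x = 0 → ∃ c : ℝ, x = fun _ => c) {k₀ : n} (hk₀ : hS.eigenvalues k₀ = 0)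
    (μ : ℝ) :
    S - μ • centeringMatrix n = (hS.eigenvectorUnitary : Matrix n n ℝ) *
      diagonal (hS.eigenvalues - μ • (1 - Pi.single k₀ 1)) *
        (hS.eigenvectorUnitary : Matrix n n ℝ)ᵀ := by
  conv_lhs => rw [hS.eq_eigenvectorUnitary_mul_diagonal_mul_transpose,
    hS.centeringMatrix_eq_of_eigenvalues_eq_zero hker hk₀]
  have hdiag : diagonal (hS.eigenvalues - μ • (1 - Pi.single k₀ 1)) =
      diagonal hS.eigenvalues - μ • diagonal (1 - Pi.single k₀ 1) := by
    rw [← diagonal_smul, diagonal_sub]; rfl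
  rw [hdiag, mul_sub, sub_mul, Matrix.mul_smul, Matrix.smul_mul]

end Matrix.IsHermitian

theorem Matrix.PosSemidef.exists_mul_transpose_eq_sub_smul_centeringMatrix {b : ℕ} (hb : 2 ≤ b)
    {S : Matrix (Fin b) (Fin b) ℝ} (hpsd : S.PosSemidef) (h1 : S *ᵥ 1 = 0)
    (hker : ∀ x, S *ᵥ x = 0 → ∃ c : ℝ, x = fun _ => c) :
    ∃ μ : ℝ, 0 < μ ∧
      ∃ G : Matrix (Fin b) (Fin (b - 2)) ℝ, G * Gᵀ = S - μ • centeringMatrix (Fin b) := by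
  have hS := hpsd.isHermitian
  have : Nonempty (Fin b) := ⟨⟨0, by omega⟩⟩
  obtain ⟨k₀, hk₀⟩ := hS.exists_eigenvalues_eq_zero h1
  have hne : (Finset.univ.erase k₀).Nonempty := by
    rw [← Finset.card_pos, Finset.card_erase_of_mem (Finset.mem_univ _), Finset.card_univ,
      Fintype.card_fin]
    omega
  obtain ⟨k₁, hk₁, hmin⟩ := (Finset.univ.erase k₀).exists_min_image hS.eigenvalues hne
  have hk₁₀ : k₁ ≠ k₀ := Finset.ne_of_mem_erase hk₁
  -- `μ` is the least nonzero eigenvalue: all weights `w k` are `≥ 0`, and `w k₀ = w k₁ = 0`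
  set μ := hS.eigenvalues k₁
  set w := hS.eigenvalues - μ • (1 - Pi.single k₀ 1)
  have hw : 0 ≤ w := by
    intro k
    by_cases hk : k = k₀
    · simp [w, hk, hk₀]
    · simpa [w, hk] using hmin k (Finset.mem_erase.2 ⟨hk, Finset.mem_univ k⟩)
  have hw0 : ∀ k ∈ ({k₀, k₁} : Finset (Fin b)), w k = 0 := by
    simp [w, hk₀, hk₁₀, μ]
  set s := ({k₀, k₁} : Finset (Fin b))ᶜ
  have hs : s.card = b - 2 := by
    rw [Finset.card_compl, Finset.card_pair hk₁₀.symm, Fintype.card_fin]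
  set X := (hS.eigenvectorUnitary : Matrix (Fin b) (Fin b) ℝ) * diagonal fun k => √(w k)
  refine ⟨μ, hS.eigenvalues_pos_of_ne_of_eigenvalues_eq_zero hpsd hker hk₀ hk₁₀,
    X.submatrix id (s.orderEmbOfFin hs), ?_⟩
  rw [submatrix_mul_transpose_submatrix_of_forall_notMem_range _ (s.orderEmbOfFin hs).injective,
    mul_diagonal_sqrt_mul_transpose _ hw,
    hS.sub_smul_centeringMatrix_eq_of_eigenvalues_eq_zero hker hk₀]
  intro j hj i
  rw [Finset.range_orderEmbOfFin, Finset.coe_compl, Set.notMem_compl_iff] at hj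
  simp [X, hw0 j hj]

theorem transpose_mulVec_one_eq_zero_of_mul_transpose_eq {n m : Type*} [Fintype n] [Fintype m]
    [DecidableEq n] {S : Matrix n n ℝ} {μ : ℝ} {G : Matrix n m ℝ}
    (hG : G * Gᵀ = S - μ • centeringMatrix n) (h1 : S *ᵥ 1 = 0) : Gᵀ *ᵥ 1 = 0 := by
  rw [← conjTranspose_eq_transpose_of_trivial, ← self_mul_conjTranspose_mulVec_eq_zero,
    conjTranspose_eq_transpose_of_trivial, hG, sub_mulVec, h1, smul_mulVec,
    centeringMatrix_mulVec_one, smul_zero, sub_zero]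

section Schur

variable {K l m : Type*} [Field K] [Fintype m] [DecidableEq m]

theorem Matrix.transpose_fromBlocks_add_mul_inv_mul_transpose {Λ : Matrix l l K} (B : Matrix l m K)
    {C : Matrix m m K} (hΛ : Λᵀ = Λ) (hC : Cᵀ = C) :
    (fromBlocks (Λ + B * C⁻¹ * Bᵀ) B Bᵀ C)ᵀ = fromBlocks (Λ + B * C⁻¹ * Bᵀ) B Bᵀ C := by
  rw [fromBlocks_transpose, transpose_transpose, transpose_add, hΛ, transpose_mul, transpose_mul,
    transpose_transpose, transpose_nonsing_inv, hC, Matrix.mul_assoc]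

theorem Matrix.fromBlocks_add_mul_inv_mul_transpose_mulVec_one [Fintype l] {Λ : Matrix l l K}
    {B : Matrix l m K} {C : Matrix m m K} (hC : IsUnit C) (hΛ : Λ *ᵥ 1 = 0)
    (hBC : Bᵀ *ᵥ 1 + C *ᵥ 1 = 0) :
    fromBlocks (Λ + B * C⁻¹ * Bᵀ) B Bᵀ C *ᵥ 1 = 0 := by
  have hB1 : B *ᵥ 1 = (B * C⁻¹) *ᵥ (C *ᵥ 1) := by
    rw [mulVec_mulVec, Matrix.mul_assoc, nonsing_inv_mul _ ((isUnit_iff_isUnit_det C).1 hC),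
      Matrix.mul_one]
  rw [fromBlocks_mulVec]
  ext (u | j)
  · have : (Λ + B * C⁻¹ * Bᵀ) *ᵥ 1 + B *ᵥ 1 = 0 := by
      rw [add_mulVec, hΛ, zero_add, hB1, ← mulVec_mulVec, ← mulVec_add, hBC, mulVec_zero]
    exact congr_fun this u
  · exact congr_fun hBC j

theorem Matrix.mul_inv_diagonal_const_mul {n : Type*} (X : Matrix l m K) (Y : Matrix m n K)
    {a : K} (ha : a ≠ 0) : X * (diagonal fun _ : m => a)⁻¹ * Y = a⁻¹ • (X * Y) := by
  have hinv : (diagonal fun _ : m => a)⁻¹ = diagonal fun _ => a⁻¹ :=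
    inv_eq_left_inv (by simp [inv_mul_cancel₀ ha])
  rw [hinv, ← smul_one_eq_diagonal, Matrix.mul_smul, Matrix.mul_one, Matrix.smul_mul]

end Schur

section Coupling

variable {n m : Type*} [Fintype n]

noncomputable def couplingBlock (μ : ℝ) (G : Matrix n m ℝ) : Matrix n m ℂ :=
  of fun u j => ⟨-μ / Fintype.card n, -(√μ * G u j)⟩

@[simp]
theorem couplingBlock_re (μ : ℝ) (G : Matrix n m ℝ) (u : n) (j : m) :
    (couplingBlock μ G u j).re = -μ / Fintype.card n :=
  rfl

@[simp]
theorem couplingBlock_im (μ : ℝ) (G : Matrix n m ℝ) (u : n) (j : m) :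
    (couplingBlock μ G u j).im = -(√μ * G u j) :=
  rfl

theorem transpose_couplingBlock_mulVec_one [Nonempty n] (μ : ℝ) {G : Matrix n m ℝ}
    (hG : Gᵀ *ᵥ 1 = 0) : (couplingBlock μ G)ᵀ *ᵥ 1 = fun _ => -(μ : ℂ) := by
  funext j
  apply Complex.ext
  · simp only [mulVec, dotProduct, transpose_apply, Pi.one_apply, mul_one, Complex.re_sum,
      couplingBlock_re, Finset.sum_const, Finset.card_univ, nsmul_eq_mul, Complex.neg_re,
      Complex.ofReal_re]
    field_simp
  · have hj : ∑ i, G i j = 0 := by simpa [mulVec, dotProduct] using congr_fun hG j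
    simp [mulVec, dotProduct, Complex.im_sum, ← Finset.mul_sum, hj]

theorem re_couplingBlock_mul_transpose_apply [Fintype m] {μ : ℝ} (hμ : 0 ≤ μ) (G : Matrix n m ℝ)
    (u v : n) :
    ((couplingBlock μ G * (couplingBlock μ G)ᵀ) u v).re =
      Fintype.card m * (μ / Fintype.card n) ^ 2 - μ * (G * Gᵀ) u v := by
  have hsqrt : ∀ j, -(√μ * G u j) * -(√μ * G v j) = μ * (G u j * G v j) := fun j => by
    linear_combination (G u j * G v j) * Real.mul_self_sqrt hμ
  simp only [mul_apply, transpose_apply, Complex.re_sum, Complex.mul_re, couplingBlock_re,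
    couplingBlock_im, hsqrt, Finset.sum_sub_distrib, Finset.sum_const, Finset.card_univ,
    nsmul_eq_mul, Finset.mul_sum]
  ring

theorem re_add_inv_smul_couplingBlock_mul_transpose_apply_lt_zero [Fintype m] [DecidableEq n]
    {Λ : Matrix n n ℂ} {μ : ℝ} (hμ : 0 < μ) {G : Matrix n m ℝ}
    (hG : G * Gᵀ = (of fun i j => (Λ i j).re) - μ • centeringMatrix n)
    (hm : Fintype.card m < Fintype.card n) {u v : n} (huv : u ≠ v) :
    ((Λ + (μ : ℂ)⁻¹ • (couplingBlock μ G * (couplingBlock μ G)ᵀ)) u v).re < 0 := by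
  have hn : (0 : ℝ) < Fintype.card n := by exact_mod_cast (Nat.zero_le _).trans_lt hm
  have hGuv := congr_fun₂ hG u v
  simp only [Matrix.sub_apply, Matrix.smul_apply, centeringMatrix, one_apply_ne huv, of_apply,
    smul_eq_mul, mul_one, zero_sub] at hGuv
  have hre : ((Λ + (μ : ℂ)⁻¹ • (couplingBlock μ G * (couplingBlock μ G)ᵀ)) u v).re =
      μ * (Fintype.card m - Fintype.card n) / Fintype.card n ^ 2 := by
    rw [Matrix.add_apply, Matrix.smul_apply, smul_eq_mul, ← Complex.ofReal_inv, Complex.add_re,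
      Complex.re_ofReal_mul, re_couplingBlock_mul_transpose_apply hμ.le, hGuv]
    field_simp
    ring
  rw [hre]
  have hmn : (Fintype.card m : ℝ) < Fintype.card n := by exact_mod_cast hm
  exact div_neg_of_neg_of_pos (mul_neg_of_pos_of_neg hμ (sub_neg.2 hmn)) (by positivity)

end Coupling

theorem response_realizable_as_schur {b : ℕ} (hb : 3 ≤ b)
    (Λ : Matrix (Fin b) (Fin b) ℂ)
    (hsymm : Λᵀ = Λ)
    (hrow : Λ.mulVec 1 = 0)
    (hpsd : (Matrix.of fun i j => (Λ i j).re).PosSemidef)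
    (hker : ∀ x : Fin b → ℝ,
      (Matrix.of fun i j => (Λ i j).re).mulVec x = 0 → ∃ c : ℝ, x = fun _ => c) :
    ∃ (A : Matrix (Fin b) (Fin b) ℂ) (B : Matrix (Fin b) (Fin (b - 2)) ℂ)
      (C : Matrix (Fin (b - 2)) (Fin (b - 2)) ℂ),
      IsUnit C ∧
      (Matrix.fromBlocks A B Bᵀ C)ᵀ = Matrix.fromBlocks A B Bᵀ C ∧
      (Matrix.fromBlocks A B Bᵀ C).mulVec 1 = 0 ∧
      (∀ u v, u ≠ v → Matrix.fromBlocks A B Bᵀ C u v ≠ 0 →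
        (Matrix.fromBlocks A B Bᵀ C u v).re < 0) ∧
      A - B * C⁻¹ * Bᵀ = Λ := by
  have : Nonempty (Fin b) := ⟨⟨0, by omega⟩⟩
  have hS1 : (of fun i j => (Λ i j).re) *ᵥ 1 = 0 := by
    ext u
    simpa [mulVec, dotProduct, ← Complex.re_sum] using congr_arg Complex.re (congr_fun hrow u)
  obtain ⟨μ, hμ, G, hG⟩ := hpsd.exists_mul_transpose_eq_sub_smul_centeringMatrix (by omega) hS1 hker
  have hG1 := transpose_mulVec_one_eq_zero_of_mul_transpose_eq hG hS1
  have hμ0 : (μ : ℂ) ≠ 0 := Complex.ofReal_ne_zero.2 hμ.ne'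
  set B := couplingBlock μ G
  set C : Matrix (Fin (b - 2)) (Fin (b - 2)) ℂ := diagonal fun _ => (μ : ℂ)
  have hC : IsUnit C := isUnit_diagonal.2 (Pi.isUnit_iff.2 fun _ => hμ0.isUnit)
  have hBC : Bᵀ *ᵥ 1 + C *ᵥ 1 = 0 := by
    rw [transpose_couplingBlock_mulVec_one μ hG1]
    ext j
    simp [C]
  have hBCB : B * C⁻¹ * Bᵀ = (μ : ℂ)⁻¹ • (B * Bᵀ) := mul_inv_diagonal_const_mul _ _ hμ0
  refine ⟨Λ + B * C⁻¹ * Bᵀ, B, C, hC, transpose_fromBlocks_add_mul_inv_mul_transpose B hsymm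
    (diagonal_transpose _), fromBlocks_add_mul_inv_mul_transpose_mulVec_one hC hrow hBC, ?_,
    add_sub_cancel_right _ _⟩
  have hBre : -μ / (b : ℝ) < 0 :=
    div_neg_of_neg_of_pos (neg_neg_of_pos hμ) (Nat.cast_pos.2 (by omega))
  rintro (u | j) (v | k) huv hne
  · have hbm : Fintype.card (Fin (b - 2)) < Fintype.card (Fin b) := by
      simp only [Fintype.card_fin]; omega
    simpa [hBCB] using
      re_add_inv_smul_couplingBlock_mul_transpose_apply_lt_zero hμ hG hbm (huv ∘ congr_arg Sum.inl)
  · simpa [B] using hBre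
  · simpa [B] using hBre
  · simp [C, diagonal_apply_ne _ (huv ∘ congr_arg Sum.inr)] at hne
end

section
/- Let L be the Laplace matrix of a connected network with complex conductances of positive real part, partitioned as L = [[A,B],[B^T,C]] with b boundary and n ≥ 1 interior nodes. Then the real part of the response matrix R = A - B C⁻¹ B^T is positive semidefinite, i.e., Re(x^T R x) ≥ 0 for every real vector x ∈ ℝ^b. -/
/-!
Extend a real boundary vector `x` to `z = (x, -C⁻¹ Bᵀ x)`. The interior rows of `L z` vanish, so
`xᵀ R x = z* L z`, whose real part is the energy `½ ∑ Re c_uv |z_u - z_v|² ≥ 0`.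
`C` is invertible: a kernel vector of `C`, extended by zero on the nonempty boundary, has zero
energy, hence is constant on the connected network, hence zero.
-/

open Matrix

theorem SimpleGraph.Reachable.eq_of_forall_adj {V α : Type*} {G : SimpleGraph V} {f : V → α}
    (hf : ∀ u v, G.Adj u v → f u = f v) {u v : V} (h : G.Reachable u v) : f u = f v := by
  obtain ⟨p⟩ := h
  induction p with
  | nil => rfl
  | cons hadj _ ih => exact (hf _ _ hadj).trans ih

namespace Matrix

theorem IsSymm.fromBlocks_toBlocks {m n α : Type*} {M : Matrix (m ⊕ n) (m ⊕ n) α}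
    (hM : M.IsSymm) :
    Matrix.fromBlocks M.toBlocks₁₁ M.toBlocks₁₂ M.toBlocks₁₂ᵀ M.toBlocks₂₂ = M := by
  nth_rewrite 3 [← hM.eq]
  exact Matrix.fromBlocks_toBlocks M

variable {m n α : Type*} [Fintype m] [Fintype n] [DecidableEq n] [CommRing α] [StarRing α]

theorem star_dotProduct_schur_complement_mulVec (A : Matrix m m α) (B : Matrix m n α)
    (B' : Matrix n m α) (C : Matrix n n α) (hC : IsUnit C.det) (x : m → α) :
    star x ⬝ᵥ (A - B * C⁻¹ * B') *ᵥ x =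
      star (Sum.elim x (-(C⁻¹ *ᵥ B' *ᵥ x))) ⬝ᵥ
        fromBlocks A B B' C *ᵥ Sum.elim x (-(C⁻¹ *ᵥ B' *ᵥ x)) := by
  have hharm : B' *ᵥ x + C *ᵥ -(C⁻¹ *ᵥ B' *ᵥ x) = 0 := by
    rw [mulVec_neg, mulVec_mulVec, mul_nonsing_inv C hC, one_mulVec, add_neg_cancel]
  rw [fromBlocks_mulVec, Sum.elim_comp_inl, Sum.elim_comp_inr, hharm, Function.star_sumElim,
    sumElim_dotProduct_sumElim, dotProduct_zero, add_zero, sub_mulVec, mulVec_neg,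
    ← mulVec_mulVec, ← mulVec_mulVec, sub_eq_add_neg]

end Matrix

section Laplacian

def laplacian {V : Type*} [Fintype V] [DecidableEq V] (c : V → V → ℂ) : Matrix V V ℂ :=
  of fun u v => if u = v then ∑ w, c u w else -c u v

variable {V : Type*} {c : V → V → ℂ}

theorem re_mul_normSq_nonneg (hpos : ∀ u v, c u v ≠ 0 → 0 < (c u v).re) (u w : V) (d : ℂ) :
    0 ≤ (c u w).re * Complex.normSq d := by
  rcases eq_or_ne (c u w) 0 with h | h
  · simp [h]
  · exact mul_nonneg (hpos u w h).le (Complex.normSq_nonneg d)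

variable [Fintype V] [DecidableEq V]

theorem isSymm_laplacian (hsymm : ∀ u v, c u v = c v u) : (laplacian c).IsSymm := by
  refine IsSymm.ext fun u v => ?_
  by_cases h : u = v
  · subst h; rfl
  · simp [laplacian, h, Ne.symm h, hsymm u v]

theorem laplacian_mulVec_apply (hloop : ∀ u, c u u = 0) (z : V → ℂ) (u : V) :
    (laplacian c *ᵥ z) u = ∑ w, c u w * (z u - z w) := by
  have hentry : ∀ w, laplacian c u w * z w
      = (if u = w then (∑ v, c u v) * z u else 0) - c u w * z w := by
    intro w
    by_cases hw : u = w
    · subst hw; simp [laplacian, hloop u]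
    · simp [laplacian, hw]
  simp only [mulVec, dotProduct, hentry, Finset.sum_sub_distrib, Finset.sum_ite_eq,
    Finset.mem_univ, if_true, mul_sub, Finset.sum_mul]

/-- Symmetrize `∑ u w, c u w * conj (z u) * (z u - z w)` under `u ↔ w`. -/
theorem two_mul_star_dotProduct_laplacian_mulVec (hsymm : ∀ u v, c u v = c v u)
    (hloop : ∀ u, c u u = 0) (z : V → ℂ) :
    2 * (star z ⬝ᵥ laplacian c *ᵥ z) = ∑ u, ∑ w, c u w * Complex.normSq (z u - z w) := by
  have hS : star z ⬝ᵥ laplacian c *ᵥ z = ∑ u, ∑ w, c u w * (star (z u) * (z u - z w)) := by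
    simp only [dotProduct, laplacian_mulVec_apply hloop, Pi.star_apply, Finset.mul_sum]
    exact Finset.sum_congr rfl fun u _ => Finset.sum_congr rfl fun w _ => by ring
  have hswap : ∑ u, ∑ w, c u w * (star (z u) * (z u - z w))
      = ∑ u, ∑ w, c u w * (star (z w) * (z w - z u)) := by
    rw [Finset.sum_comm]
    exact Finset.sum_congr rfl fun u _ => Finset.sum_congr rfl fun w _ => by rw [hsymm]
  rw [two_mul, hS]
  nth_rewrite 2 [hswap]
  rw [← Finset.sum_add_distrib]
  refine Finset.sum_congr rfl fun u _ => ?_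
  rw [← Finset.sum_add_distrib]
  refine Finset.sum_congr rfl fun w _ => ?_
  rw [Complex.normSq_eq_conj_mul_self, map_sub, starRingEnd_apply, starRingEnd_apply]
  ring

theorem re_star_dotProduct_laplacian_mulVec (hsymm : ∀ u v, c u v = c v u)
    (hloop : ∀ u, c u u = 0) (z : V → ℂ) :
    (star z ⬝ᵥ laplacian c *ᵥ z).re = (∑ u, ∑ w, (c u w).re * Complex.normSq (z u - z w)) / 2 := by
  have h := congrArg Complex.re (two_mul_star_dotProduct_laplacian_mulVec hsymm hloop z)
  simp only [Complex.mul_re, Complex.re_ofNat, Complex.im_ofNat, Complex.ofReal_re,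
    Complex.ofReal_im, zero_mul, mul_zero, sub_zero, Complex.re_sum] at h
  linarith

variable (hsymm : ∀ u v, c u v = c v u) (hloop : ∀ u, c u u = 0)
  (hpos : ∀ u v, c u v ≠ 0 → 0 < (c u v).re)
include hsymm hloop hpos

theorem re_star_dotProduct_laplacian_mulVec_nonneg (z : V → ℂ) :
    0 ≤ (star z ⬝ᵥ laplacian c *ᵥ z).re := by
  rw [re_star_dotProduct_laplacian_mulVec hsymm hloop]
  have := Finset.sum_nonneg fun u (_ : u ∈ Finset.univ) =>
    Finset.sum_nonneg fun w (_ : w ∈ Finset.univ) => re_mul_normSq_nonneg hpos u w (z u - z w)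
  positivity

theorem eq_of_re_star_dotProduct_laplacian_mulVec_eq_zero {z : V → ℂ}
    (h0 : (star z ⬝ᵥ laplacian c *ᵥ z).re = 0) {u w : V} (hc : c u w ≠ 0) : z u = z w := by
  rw [re_star_dotProduct_laplacian_mulVec hsymm hloop, div_eq_zero_iff] at h0
  have hterm : (c u w).re * Complex.normSq (z u - z w) = 0 := by
    refine le_antisymm ?_ (re_mul_normSq_nonneg hpos u w _)
    calc (c u w).re * Complex.normSq (z u - z w)
        ≤ ∑ w', (c u w').re * Complex.normSq (z u - z w') :=
          Finset.single_le_sum (f := fun w' => (c u w').re * Complex.normSq (z u - z w'))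
            (fun w' _ => re_mul_normSq_nonneg hpos u w' _) (Finset.mem_univ w)
      _ ≤ ∑ u', ∑ w', (c u' w').re * Complex.normSq (z u' - z w') :=
          Finset.single_le_sum (f := fun u' => ∑ w', (c u' w').re * Complex.normSq (z u' - z w'))
            (fun u' _ => Finset.sum_nonneg fun w' _ => re_mul_normSq_nonneg hpos u' w' _)
            (Finset.mem_univ u)
      _ = 0 := h0.resolve_right two_ne_zero
  rw [mul_eq_zero, or_iff_right (hpos u w hc).ne', Complex.normSq_eq_zero, sub_eq_zero] at hterm
  exact hterm

theorem eq_of_re_star_dotProduct_laplacian_mulVec_eq_zero_of_connected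
    (hconn : (SimpleGraph.fromRel fun u v => c u v ≠ 0).Connected) {z : V → ℂ}
    (h0 : (star z ⬝ᵥ laplacian c *ᵥ z).re = 0) (u w : V) : z u = z w := by
  refine (hconn.preconnected u w).eq_of_forall_adj fun u' w' hadj => ?_
  rcases hadj.2 with hc | hc
  · exact eq_of_re_star_dotProduct_laplacian_mulVec_eq_zero hsymm hloop hpos h0 hc
  · exact (eq_of_re_star_dotProduct_laplacian_mulVec_eq_zero hsymm hloop hpos h0 hc).symm

end Laplacian

theorem isUnit_det_toBlocks₂₂_laplacian {m n : Type*} [Fintype m] [Fintype n] [DecidableEq m]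
    [DecidableEq n] [Nonempty m] {c : m ⊕ n → m ⊕ n → ℂ} (hsymm : ∀ u v, c u v = c v u)
    (hloop : ∀ u, c u u = 0) (hpos : ∀ u v, c u v ≠ 0 → 0 < (c u v).re)
    (hconn : (SimpleGraph.fromRel fun u v => c u v ≠ 0).Connected) :
    IsUnit (laplacian c).toBlocks₂₂.det := by
  rw [isUnit_iff_ne_zero]
  intro hdet
  obtain ⟨v, hv, hCv⟩ := exists_mulVec_eq_zero_iff.mpr hdet
  have h0 : (star (Sum.elim 0 v) ⬝ᵥ laplacian c *ᵥ Sum.elim 0 v).re = 0 := by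
    rw [← fromBlocks_toBlocks (laplacian c)]
    simp [fromBlocks_mulVec, Function.star_sumElim, hCv]
  obtain ⟨i⟩ := ‹Nonempty m›
  refine hv (funext fun k => ?_)
  simpa using eq_of_re_star_dotProduct_laplacian_mulVec_eq_zero_of_connected hsymm hloop hpos
    hconn h0 (Sum.inr k) (Sum.inl i)

theorem response_real_part_posSemidef_general {b n : ℕ} (hb : 0 < b)
    (c : (Fin b ⊕ Fin n) → (Fin b ⊕ Fin n) → ℂ)
    (hsymm : ∀ u v, c u v = c v u)
    (hloop : ∀ u, c u u = 0)
    (hpos : ∀ u v, c u v ≠ 0 → 0 < (c u v).re)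
    (hconn : (SimpleGraph.fromRel fun u v => c u v ≠ 0).Connected)
    (L : Matrix (Fin b ⊕ Fin n) (Fin b ⊕ Fin n) ℂ)
    (hL : L = Matrix.of fun u v => if u = v then ∑ w, c u w else -c u v)
    (A : Matrix (Fin b) (Fin b) ℂ) (hA : A = Matrix.of fun i j => L (Sum.inl i) (Sum.inl j))
    (B : Matrix (Fin b) (Fin n) ℂ) (hB : B = Matrix.of fun i j => L (Sum.inl i) (Sum.inr j))
    (C : Matrix (Fin n) (Fin n) ℂ) (hC : C = Matrix.of fun i j => L (Sum.inr i) (Sum.inr j)) :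
    ∀ x : Fin b → ℝ,
      0 ≤ ((fun i => (x i : ℂ)) ⬝ᵥ (A - B * C⁻¹ * Bᵀ).mulVec fun i => (x i : ℂ)).re := by
  intro x
  have : Nonempty (Fin b) := Fin.pos_iff_nonempty.mp hb
  change L = laplacian c at hL
  subst hL
  have hblocks : fromBlocks A B Bᵀ C = laplacian c := by
    subst hA hB hC
    exact (isSymm_laplacian hsymm).fromBlocks_toBlocks
  have hCunit : IsUnit C.det := hC ▸ isUnit_det_toBlocks₂₂_laplacian hsymm hloop hpos hconn
  have hreal : star (fun i => (x i : ℂ)) = fun i => (x i : ℂ) :=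
    funext fun i => Complex.conj_ofReal (x i)
  have hschur := star_dotProduct_schur_complement_mulVec A B Bᵀ C hCunit fun i => (x i : ℂ)
  rw [hreal, hblocks] at hschur
  rw [hschur]
  exact re_star_dotProduct_laplacian_mulVec_nonneg hsymm hloop hpos _

theorem response_real_part_posSemidef {b n : ℕ} (hb : 0 < b) (hn : 0 < n)
    (c : (Fin b ⊕ Fin n) → (Fin b ⊕ Fin n) → ℂ)
    (hsymm : ∀ u v, c u v = c v u)
    (hloop : ∀ u, c u u = 0)
    (hpos : ∀ u v, c u v ≠ 0 → 0 < (c u v).re)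
    (hconn : (SimpleGraph.fromRel fun u v => c u v ≠ 0).Connected)
    (L : Matrix (Fin b ⊕ Fin n) (Fin b ⊕ Fin n) ℂ)
    (hL : L = Matrix.of fun u v => if u = v then ∑ w, c u w else -c u v)
    (A : Matrix (Fin b) (Fin b) ℂ) (hA : A = Matrix.of fun i j => L (Sum.inl i) (Sum.inl j))
    (B : Matrix (Fin b) (Fin n) ℂ) (hB : B = Matrix.of fun i j => L (Sum.inl i) (Sum.inr j))
    (C : Matrix (Fin n) (Fin n) ℂ) (hC : C = Matrix.of fun i j => L (Sum.inr i) (Sum.inr j)) :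
    ∀ x : Fin b → ℝ,
      0 ≤ ((fun i => (x i : ℂ)) ⬝ᵥ (A - B * C⁻¹ * Bᵀ).mulVec fun i => (x i : ℂ)).re :=
  response_real_part_posSemidef_general hb c hsymm hloop hpos hconn L hL A hA B hB C hC
end

section
/- Every complex symmetric b×b matrix Λ (b ≥ 2) with zero row sums, positive semidefinite real part, and real part whose kernel is exactly the constant vectors, is the response matrix of a connected alternating-current network with b boundary nodes and at most max(b-2, 0) interior nodes, all of whose conductances have positive real part. -/
/-!
Let `R = Re Λ`. Its eigenvalue `0` is simple with eigenvector `𝟙 / √b`; let `μ` be its least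
positive eigenvalue. Then `R - μ (I - J / b)` is positive semidefinite and annihilates `𝟙` and a
`μ`-eigenvector, so it is the Gram matrix of `b - 2` mean-zero vectors `w k`: off the diagonal,
`R i j + ε = ∑ k, w k i * w k j` with `ε = μ / b`.

Add `b - 2` interior nodes, joined to no other interior node and to boundary node `i` by
`d k i = ε + I √γ w k i`, where `γ = b ε`. The interior block is then `γ • 1`, and eliminating it
adds `γ⁻¹ ∑ k, d k i * d k j` to the conductance between `i` and `j`, with real part
`(b - 2) ε² / γ - R i j - ε`. Choosing the boundary conductances so that the response matches `Λ`
off the diagonal therefore leaves them with real part `ε (1 - (b - 2) / b) > 0`. Both the response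
matrix and `Λ` have zero row sums, so they agree on the diagonal as well.
-/

open Matrix Finset

namespace Matrix.IsHermitian

variable {n : Type*} [Fintype n] [DecidableEq n] {A : Matrix n n ℝ} (hA : A.IsHermitian)

theorem apply_eq_sum_eigenvalues_mul (i j : n) :
    A i j = ∑ m, hA.eigenvalues m * (hA.eigenvectorBasis m i * hA.eigenvectorBasis m j) := by
  conv_lhs => rw [hA.spectral_theorem, Unitary.conjStarAlgAut_apply]
  simp only [mul_apply, diagonal_apply, Function.comp, mul_ite, mul_zero, sum_ite_eq', mem_univ,
    if_true, star_apply, star_trivial, eigenvectorUnitary_apply, RCLike.ofReal_real_eq_id, id_eq]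
  exact sum_congr rfl fun m _ => by ring

theorem sum_eigenvectorBasis_apply_mul (i j : n) :
    ∑ m, hA.eigenvectorBasis m i * hA.eigenvectorBasis m j = (1 : Matrix n n ℝ) i j := by
  have := hA.eigenvectorBasis.sum_inner_mul_inner
    (EuclideanSpace.single i 1) (EuclideanSpace.single j 1)
  simpa [EuclideanSpace.inner_single_left, EuclideanSpace.inner_single_right, one_apply, eq_comm]
    using this

theorem eigenvectorBasis_dotProduct (m m' : n) :
    ⇑(hA.eigenvectorBasis m) ⬝ᵥ ⇑(hA.eigenvectorBasis m') = (1 : Matrix n n ℝ) m m' := by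
  have := orthonormal_iff_ite.mp hA.eigenvectorBasis.orthonormal m m'
  simpa [PiLp.inner_apply, dotProduct, one_apply, mul_comm] using this

theorem sub_smul_one_apply_eq_sum (μ : ℝ) (i j : n) :
    (A - μ • 1) i j =
      ∑ m, (hA.eigenvalues m - μ) * (hA.eigenvectorBasis m i * hA.eigenvectorBasis m j) := by
  simp only [sub_mul, sum_sub_distrib, ← mul_sum, hA.sum_eigenvectorBasis_apply_mul,
    ← hA.apply_eq_sum_eigenvalues_mul, sub_apply, smul_apply, smul_eq_mul]

theorem exists_eigenvalues_eq_zero_s17 [Nonempty n] (hA1 : A *ᵥ 1 = 0) :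
    ∃ m, hA.eigenvalues m = 0 := by
  have hdet : A.det = 0 := exists_mulVec_eq_zero_iff.mp ⟨1, one_ne_zero, hA1⟩
  simpa [hA.det_eq_prod_eigenvalues, prod_eq_zero_iff] using hdet

theorem sum_eigenvectorBasis_eq_zero (hA1 : A *ᵥ 1 = 0) {m : n} (hm : hA.eigenvalues m ≠ 0) :
    ∑ i, hA.eigenvectorBasis m i = 0 := by
  have hsymm : Aᵀ = A := isHermitian_iff_isSymm.mp hA
  have h : hA.eigenvalues m * ∑ i, hA.eigenvectorBasis m i = 0 :=
    calc hA.eigenvalues m * ∑ i, hA.eigenvectorBasis m i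
        = 1 ⬝ᵥ (A *ᵥ ⇑(hA.eigenvectorBasis m)) := by
          simp [hA.mulVec_eigenvectorBasis, dotProduct, mul_sum]
      _ = 0 := by rw [dotProduct_mulVec, ← mulVec_transpose, hsymm, hA1, zero_dotProduct]
  exact (mul_eq_zero.mp h).resolve_left hm

variable (hker : ∀ x, A *ᵥ x = 0 → ∃ k : ℝ, x = fun _ => k)
include hker

theorem exists_eigenvectorBasis_eq_const {m : n} (hm : hA.eigenvalues m = 0) :
    ∃ k : ℝ, (Fintype.card n : ℝ) * (k * k) = 1 ∧ ∀ i, hA.eigenvectorBasis m i = k := by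
  obtain ⟨k, hk⟩ := hker _ (by rw [hA.mulVec_eigenvectorBasis, hm, zero_smul])
  refine ⟨k, ?_, congrFun hk⟩
  simpa [hk, dotProduct] using hA.eigenvectorBasis_dotProduct m m

theorem eq_of_eigenvalues_eq_zero {m m' : n} (hm : hA.eigenvalues m = 0)
    (hm' : hA.eigenvalues m' = 0) : m = m' := by
  obtain ⟨k, hk, hv⟩ := hA.exists_eigenvectorBasis_eq_const hker hm
  obtain ⟨k', hk', hv'⟩ := hA.exists_eigenvectorBasis_eq_const hker hm'
  by_contra hne
  have h := hA.eigenvectorBasis_dotProduct m m'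
  simp only [dotProduct, hv, hv', sum_const, card_univ, nsmul_eq_mul, one_apply_ne hne] at h
  nlinarith

end Matrix.IsHermitian

namespace Matrix.PosSemidef

variable {n : Type*} [Fintype n] [DecidableEq n] {A : Matrix n n ℝ}

theorem exists_add_offDiag_eq_gram (hA : A.PosSemidef) (hA1 : A *ᵥ 1 = 0)
    (hker : ∀ x, A *ᵥ x = 0 → ∃ k : ℝ, x = fun _ => k) (hn : 2 ≤ Fintype.card n)
    {ι : Type*} [Fintype ι] (hι : Fintype.card ι = Fintype.card n - 2) :
    ∃ ε > 0, ∃ w : ι → n → ℝ, (∀ k, ∑ i, w k i = 0) ∧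
      ∀ i j, i ≠ j → ∑ k, w k i * w k j = A i j + ε := by
  have hH := hA.isHermitian
  set ev := hH.eigenvalues
  set v := fun m => ⇑(hH.eigenvectorBasis m)
  have : Nonempty n := Fintype.card_pos_iff.mp (by omega)
  obtain ⟨m₀, hm₀⟩ : ∃ m, ev m = 0 := hH.exists_eigenvalues_eq_zero_s17 hA1
  have hpos : ∀ m ≠ m₀, 0 < ev m := fun m hm =>
    (hA.eigenvalues_nonneg m).lt_of_ne' fun h => hm (hH.eq_of_eigenvalues_eq_zero hker h hm₀)
  have hne : (univ.erase m₀).Nonempty := by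
    rw [← card_pos, card_erase_of_mem (mem_univ _), card_univ]; omega
  obtain ⟨m₁, hm₁, hmin⟩ := (univ.erase m₀).exists_min_image ev hne
  set K := (univ.erase m₀).erase m₁
  let e : ι ≃ K := Fintype.equivOfCardEq <| by
    rw [hι, Fintype.card_coe, card_erase_of_mem hm₁, card_erase_of_mem (mem_univ _), card_univ]
    omega
  have hK : ∀ m ∈ K, m ≠ m₀ ∧ ev m₁ ≤ ev m := fun m hm =>
    ⟨(mem_erase.mp (mem_of_mem_erase hm)).1, hmin m (mem_of_mem_erase hm)⟩
  obtain ⟨k₀, hk₀, hv₀⟩ := hH.exists_eigenvectorBasis_eq_const hker hm₀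
  refine ⟨ev m₁ / Fintype.card n, div_pos (hpos m₁ (ne_of_mem_erase hm₁)) (by positivity),
    fun k i => √(ev (e k) - ev m₁) * v (e k) i, fun k => ?_, fun i j hij => ?_⟩
  · rw [← mul_sum, hH.sum_eigenvectorBasis_eq_zero hA1 (hpos _ (hK _ (e k).2).1).ne', mul_zero]
  · calc ∑ k, √(ev (e k) - ev m₁) * v (e k) i * (√(ev (e k) - ev m₁) * v (e k) j)
        = ∑ m ∈ K, (ev m - ev m₁) * (v m i * v m j) := by
          rw [← sum_coe_sort K]
          refine Fintype.sum_equiv e _ _ fun k => ?_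
          rw [mul_mul_mul_comm, Real.mul_self_sqrt (sub_nonneg.mpr (hK _ (e k).2).2)]
      _ = ∑ m ∈ univ.erase m₀, (ev m - ev m₁) * (v m i * v m j) :=
          sum_erase _ (by rw [sub_self, zero_mul])
      _ = (A - ev m₁ • 1) i j - (ev m₀ - ev m₁) * (v m₀ i * v m₀ j) := by
          rw [hH.sub_smul_one_apply_eq_sum, ← add_sum_erase _ _ (mem_univ m₀)]; ring
      _ = A i j + ev m₁ / Fintype.card n := by
          have hcard : (Fintype.card n : ℝ) ≠ 0 := by positivity
          simp only [v, hv₀, hm₀, sub_apply, smul_apply, one_apply_ne hij]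
          field_simp
          linear_combination (ev m₁) * hk₀

end Matrix.PosSemidef

theorem exists_conductances_of_gram {ι n : Type*} [Fintype ι] [Fintype n] {A : Matrix n n ℝ}
    {ε : ℝ} (hε : 0 < ε) (hι : Fintype.card ι < Fintype.card n) {w : ι → n → ℝ}
    (hw0 : ∀ k, ∑ i, w k i = 0) (hw : ∀ i j, i ≠ j → ∑ k, w k i * w k j = A i j + ε) :
    ∃ γ : ℝ, 0 < γ ∧ ∃ d : ι → n → ℂ, (∀ k, ∑ i, d k i = γ) ∧ (∀ k i, 0 < (d k i).re) ∧
      ∀ i j, i ≠ j → 0 < -A i j - γ⁻¹ * (∑ k, d k i * d k j).re := by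
  have hn : (0 : ℝ) < Fintype.card n := by exact_mod_cast (Nat.zero_le _).trans_lt hι
  have hι' : (Fintype.card ι : ℝ) / Fintype.card n < 1 :=
    (div_lt_one hn).mpr (by exact_mod_cast hι)
  set γ : ℝ := Fintype.card n * ε
  have hγ : 0 < γ := by positivity
  refine ⟨γ, hγ, fun k i => ⟨ε, √γ * w k i⟩, fun k => ?_, fun _ _ => hε, fun i j hij => ?_⟩
  · apply Complex.ext <;> simp [Complex.re_sum, Complex.im_sum, ← mul_sum, hw0, γ]
  · have hgram : ∑ k, √γ * w k i * (√γ * w k j) = γ * (A i j + ε) :=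
      calc ∑ k, √γ * w k i * (√γ * w k j) = √γ * √γ * ∑ k, w k i * w k j := by
            rw [mul_sum]; exact sum_congr rfl fun k _ => by ring
        _ = γ * (A i j + ε) := by rw [Real.mul_self_sqrt hγ.le, hw i j hij]
    have hre : γ⁻¹ * (∑ k, (⟨ε, √γ * w k i⟩ * ⟨ε, √γ * w k j⟩ : ℂ)).re
        = ε * (Fintype.card ι / Fintype.card n) - (A i j + ε) := by
      simp only [Complex.re_sum, Complex.mul_re]
      rw [sum_sub_distrib, sum_const, card_univ, nsmul_eq_mul, hgram]
      field_simp
      ring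
    rw [hre]
    nlinarith

namespace Matrix

variable {n : Type*} [Fintype n]

theorem eq_of_mulVec_one_eq_zero_of_offDiag {R : Type*} [CommRing R] [DecidableEq n]
    {S T : Matrix n n R} (hS : S *ᵥ 1 = 0) (hT : T *ᵥ 1 = 0)
    (h : ∀ i j, i ≠ j → S i j = T i j) : S = T := by
  have hdiag : ∀ M : Matrix n n R, M *ᵥ 1 = 0 → ∀ i, M i i = -∑ j ∈ univ.erase i, M i j := by
    intro M hM i
    have := congrFun hM i
    rw [mulVec, dotProduct, ← add_sum_erase _ _ (mem_univ i)] at this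
    simp only [Pi.one_apply, mul_one, Pi.zero_apply] at this
    exact eq_neg_of_add_eq_zero_left this
  ext i j
  obtain rfl | hij := eq_or_ne i j
  · rw [hdiag S hS, hdiag T hT, sum_congr rfl fun j hj => h i j (ne_of_mem_erase hj).symm]
  · exact h i j hij

variable {Λ : Matrix n n ℂ}

theorem re_ofReal_dotProduct_mulVec (x : n → ℝ) :
    ((fun i => (x i : ℂ)) ⬝ᵥ Λ *ᵥ fun i => (x i : ℂ)).re = x ⬝ᵥ Λ.map Complex.re *ᵥ x := by
  simp [dotProduct, mulVec, Complex.re_sum, mul_sum, mul_left_comm]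

theorem posSemidef_map_re (hsymm : Λᵀ = Λ)
    (hpsd : ∀ x : n → ℝ, 0 ≤ ((fun i => (x i : ℂ)) ⬝ᵥ Λ *ᵥ fun i => (x i : ℂ)).re) :
    (Λ.map Complex.re).PosSemidef := by
  refine .of_dotProduct_mulVec_nonneg ?_ fun x => ?_
  · rw [isHermitian_iff_isSymm, IsSymm, ← transpose_map, hsymm]
  · simpa [← re_ofReal_dotProduct_mulVec] using hpsd x

theorem map_re_mulVec_one (hΛ1 : Λ *ᵥ 1 = 0) : Λ.map Complex.re *ᵥ 1 = 0 := by
  funext i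
  simpa [mulVec, dotProduct, Complex.re_sum] using congrArg Complex.re (congrFun hΛ1 i)

end Matrix

section Network

variable {V R : Type*} [Fintype V] [DecidableEq V] [CommRing R]

def networkLaplacian (c : V → V → R) : Matrix V V R :=
  of fun u v => if u = v then ∑ w, c u w else -c u v

theorem networkLaplacian_transpose {c : V → V → R} (hc : ∀ u v, c u v = c v u) :
    (networkLaplacian c)ᵀ = networkLaplacian c := by
  ext u v
  obtain rfl | huv := eq_or_ne u v
  · rfl
  · simp [networkLaplacian, huv, huv.symm, hc u v]

theorem networkLaplacian_mulVec_one {c : V → V → R} (hc : ∀ u, c u u = 0) :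
    networkLaplacian c *ᵥ 1 = 0 := by
  funext u
  have hoff : ∑ v ∈ univ.erase u, networkLaplacian c u v = -∑ v ∈ univ.erase u, c u v := by
    rw [← sum_neg_distrib]
    exact sum_congr rfl fun v hv => if_neg (ne_of_mem_erase hv).symm
  simp only [mulVec, dotProduct, Pi.one_apply, mul_one, Pi.zero_apply]
  rw [← add_sum_erase _ _ (mem_univ u), hoff, networkLaplacian, of_apply, if_pos rfl,
    ← add_sum_erase _ _ (mem_univ u), hc, zero_add, add_neg_cancel]

end Network

section Response

variable {m n R : Type*} [Fintype m] [Fintype n] [DecidableEq n] [CommRing R]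

noncomputable def responseMatrix (L : Matrix (m ⊕ n) (m ⊕ n) R) : Matrix m m R :=
  L.toBlocks₁₁ - L.toBlocks₁₂ * L.toBlocks₂₂⁻¹ * L.toBlocks₁₂ᵀ

theorem responseMatrix_mulVec_one {L : Matrix (m ⊕ n) (m ⊕ n) R} (hL : Lᵀ = L)
    (hL1 : L *ᵥ 1 = 0) (hC : IsUnit L.toBlocks₂₂) : responseMatrix L *ᵥ 1 = 0 := by
  have hD : L.toBlocks₁₂ᵀ = L.toBlocks₂₁ := by
    conv_rhs => rw [← hL]
    rfl
  rw [← fromBlocks_toBlocks L, fromBlocks_mulVec] at hL1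
  have h₁ := congrArg (· ∘ Sum.inl) hL1
  have h₂ := congrArg (· ∘ Sum.inr) hL1
  simp only [Sum.elim_comp_inl, Sum.elim_comp_inr, Pi.one_comp, Pi.zero_comp] at h₁ h₂
  have hCinv : L.toBlocks₂₂⁻¹ *ᵥ (L.toBlocks₁₂ᵀ *ᵥ 1) = -1 := by
    rw [hD, eq_neg_of_add_eq_zero_left h₂, mulVec_neg, mulVec_mulVec,
      nonsing_inv_mul _ ((isUnit_iff_isUnit_det _).mp hC), one_mulVec]
  rw [responseMatrix, sub_mulVec, ← mulVec_mulVec, ← mulVec_mulVec, hCinv, mulVec_neg,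
    sub_neg_eq_add, h₁]

theorem toBlocks₁₂_networkLaplacian [DecidableEq m] (c : m ⊕ n → m ⊕ n → R) :
    (networkLaplacian c).toBlocks₁₂ = of fun i k => -c (.inl i) (.inr k) := by
  ext i k
  simp [networkLaplacian, toBlocks₁₂]

end Response

section StarNetwork

variable {m n R : Type*} [DecidableEq m]

def starNetwork [Zero R] (cS : m → m → R) (d : n → m → R) : m ⊕ n → m ⊕ n → R
  | .inl i, .inl j => if i = j then 0 else cS i j
  | .inl i, .inr k => d k i
  | .inr k, .inl i => d k i
  | .inr _, .inr _ => 0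

variable [Zero R] {cS : m → m → R} {d : n → m → R}

theorem starNetwork_comm (hcS : ∀ i j, cS i j = cS j i) (u v : m ⊕ n) :
    starNetwork cS d u v = starNetwork cS d v u := by
  rcases u with i | k <;> rcases v with j | k'
  · simp only [starNetwork, eq_comm (a := i), hcS i j]
  all_goals rfl

theorem starNetwork_self (u : m ⊕ n) : starNetwork cS d u u = 0 := by
  rcases u with i | k <;> simp [starNetwork]

theorem connected_starNetwork [Nonempty m] (hcS : ∀ i j, i ≠ j → cS i j ≠ 0)
    (hd : ∀ k i, d k i ≠ 0) :
    (SimpleGraph.fromRel fun u v => starNetwork cS d u v ≠ 0).Connected := by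
  obtain ⟨o⟩ := ‹Nonempty m›
  set G := SimpleGraph.fromRel fun u v => starNetwork cS d u v ≠ 0
  have hadj : ∀ u, u ≠ .inl o → G.Adj u (.inl o) := by
    rintro (i | k) hu
    · have hio : i ≠ o := fun h => hu (h ▸ rfl)
      exact ⟨hu, .inl (by simpa [starNetwork, hio] using hcS i o hio)⟩
    · exact ⟨hu, .inl (hd k o)⟩
  have hreach : ∀ u, G.Reachable (.inl o) u := fun u =>
    (eq_or_ne u (.inl o)).elim (· ▸ .rfl) fun hu => (hadj u hu).reachable.symm
  exact G.connected_iff_exists_forall_reachable.mpr ⟨.inl o, hreach⟩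

theorem re_starNetwork_pos {cS : m → m → ℂ} {d : n → m → ℂ}
    (hcS : ∀ i j, i ≠ j → 0 < (cS i j).re) (hd : ∀ k i, 0 < (d k i).re) (u v : m ⊕ n)
    (huv : starNetwork cS d u v ≠ 0) : 0 < (starNetwork cS d u v).re := by
  rcases u with i | k <;> rcases v with j | k'
  · obtain rfl | hij := eq_or_ne i j
    · simp [starNetwork] at huv
    · simpa [starNetwork, hij] using hcS i j hij
  · exact hd k' i
  · exact hd k j
  · simp [starNetwork] at huv

end StarNetwork

section StarNetworkResponse

variable {m n K : Type*} [Fintype m] [DecidableEq m] [Fintype n] [DecidableEq n] [Field K]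
  {cS : m → m → K} {d : n → m → K} {γ : K}

theorem toBlocks₂₂_networkLaplacian_starNetwork (hd : ∀ k, ∑ i, d k i = γ) :
    (networkLaplacian (starNetwork cS d)).toBlocks₂₂ = γ • 1 := by
  ext k k'
  obtain rfl | hk := eq_or_ne k k'
  · simp [networkLaplacian, toBlocks₂₂, starNetwork, Fintype.sum_sum_type, hd]
  · simp [networkLaplacian, toBlocks₂₂, starNetwork, hk, one_apply_ne hk]

theorem isUnit_toBlocks₂₂_networkLaplacian_starNetwork (hγ : γ ≠ 0)
    (hd : ∀ k, ∑ i, d k i = γ) : IsUnit (networkLaplacian (starNetwork cS d)).toBlocks₂₂ := by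
  rw [toBlocks₂₂_networkLaplacian_starNetwork hd, isUnit_iff_isUnit_det, det_smul, det_one,
    mul_one]
  exact (isUnit_iff_ne_zero.mpr hγ).pow _

theorem responseMatrix_starNetwork_apply (hγ : γ ≠ 0) (hd : ∀ k, ∑ i, d k i = γ) {i j : m}
    (hij : i ≠ j) :
    responseMatrix (networkLaplacian (starNetwork cS d)) i j =
      -cS i j - γ⁻¹ * ∑ k, d k i * d k j := by
  have hCinv : (γ • (1 : Matrix n n K))⁻¹ = γ⁻¹ • 1 :=
    inv_eq_right_inv (by rw [smul_mul_smul_comm, mul_inv_cancel₀ hγ, one_mul, one_smul])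
  rw [responseMatrix, toBlocks₂₂_networkLaplacian_starNetwork hd, hCinv,
    toBlocks₁₂_networkLaplacian, Matrix.sub_apply, Matrix.mul_smul, Matrix.mul_one,
    Matrix.smul_mul, Matrix.smul_apply, mul_apply, smul_eq_mul]
  simp [networkLaplacian, toBlocks₁₁, starNetwork, hij, mul_sum]

end StarNetworkResponse

theorem response_map_characterization_sufficiency {b : ℕ} (hb : 2 ≤ b)
    (Λ : Matrix (Fin b) (Fin b) ℂ)
    (hsymm : Λᵀ = Λ)
    (hrow : Λ.mulVec 1 = 0)
    (hpsd : ∀ x : Fin b → ℝ,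
      0 ≤ ((fun i => (x i : ℂ)) ⬝ᵥ Λ.mulVec fun i => (x i : ℂ)).re)
    (hker : ∀ x : Fin b → ℝ,
      (Matrix.of fun i j => (Λ i j).re).mulVec x = 0 → ∃ k : ℝ, x = fun _ => k) :
    ∃ n : ℕ, n ≤ b - 2 ∧
      ∃ c : (Fin b ⊕ Fin n) → (Fin b ⊕ Fin n) → ℂ,
        (∀ u v, c u v = c v u) ∧
        (∀ u, c u u = 0) ∧
        (∀ u v, c u v ≠ 0 → 0 < (c u v).re) ∧
        (SimpleGraph.fromRel fun u v => c u v ≠ 0).Connected ∧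
        ∃ (A : Matrix (Fin b) (Fin b) ℂ) (B : Matrix (Fin b) (Fin n) ℂ)
          (C : Matrix (Fin n) (Fin n) ℂ),
          A = (Matrix.of fun i j =>
            if (Sum.inl i : Fin b ⊕ Fin n) = Sum.inl j then ∑ w, c (Sum.inl i) w
            else -c (Sum.inl i) (Sum.inl j)) ∧
          B = (Matrix.of fun i j => -c (Sum.inl i) (Sum.inr j)) ∧
          C = (Matrix.of fun i j =>
            if (Sum.inr i : Fin b ⊕ Fin n) = Sum.inr j then ∑ w, c (Sum.inr i) w
            else -c (Sum.inr i) (Sum.inr j)) ∧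
          IsUnit C ∧
          A - B * C⁻¹ * Bᵀ = Λ := by
  obtain ⟨ε, hε, w, hw0, hw⟩ := (posSemidef_map_re hsymm hpsd).exists_add_offDiag_eq_gram
    (map_re_mulVec_one hrow) hker (by simpa using hb) (ι := Fin (b - 2)) (by simp)
  obtain ⟨γ, hγ, d, hd_sum, hd_re, hd_gram⟩ :=
    exists_conductances_of_gram hε (by simp; omega) hw0 hw
  set cS : Fin b → Fin b → ℂ := fun i j => -Λ i j - (γ : ℂ)⁻¹ * ∑ k, d k i * d k j
  have hcS_re : ∀ i j, i ≠ j → 0 < (cS i j).re := fun i j hij => by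
    simpa [cS, ← Complex.ofReal_inv, Complex.re_ofReal_mul] using hd_gram i j hij
  have hcS_comm : ∀ i j, cS i j = cS j i := fun i j => by
    simp only [cS, ← transpose_apply Λ i j, hsymm, mul_comm (d _ i)]
  have hγ' : (γ : ℂ) ≠ 0 := Complex.ofReal_ne_zero.mpr hγ.ne'
  have hc_comm := starNetwork_comm (d := d) hcS_comm
  have hC := isUnit_toBlocks₂₂_networkLaplacian_starNetwork (cS := cS) hγ' hd_sum
  have : Nonempty (Fin b) := ⟨⟨0, by omega⟩⟩
  set L := networkLaplacian (starNetwork cS d)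
  refine ⟨b - 2, le_rfl, starNetwork cS d, hc_comm, starNetwork_self,
    re_starNetwork_pos hcS_re hd_re, connected_starNetwork
      (fun i j hij h => (hcS_re i j hij).ne' (by rw [h, Complex.zero_re]))
      (fun k i h => (hd_re k i).ne' (by rw [h, Complex.zero_re])),
    L.toBlocks₁₁, L.toBlocks₁₂, L.toBlocks₂₂, rfl, toBlocks₁₂_networkLaplacian _, rfl, hC, ?_⟩
  show responseMatrix L = Λ
  refine eq_of_mulVec_one_eq_zero_of_offDiag (responseMatrix_mulVec_one
    (networkLaplacian_transpose hc_comm) (networkLaplacian_mulVec_one starNetwork_self) hC)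
    hrow fun i j hij => ?_
  rw [responseMatrix_starNetwork_apply hγ' hd_sum hij]
  simp [cS]
end
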